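/- arXiv:math/0410198 — 2 statements merged into one kernel-verified Lean document; each statement's English description precedes it below -/
import Mathlib

section
/- In an ω-residually free group, if two nontrivial commuting elements are conjugate then they are equal: if a, b ∈ L are nontrivial, ab = ba, and b = g a g⁻¹ for some g ∈ L, then a = b. -/
def OmegaResiduallyFree (L : Type) [Group L] : Prop :=
  ∀ W : Finset L, ∃ (ι : Type) (f : L →* FreeGroup ι), Set.InjOn f ↑W

/-!
A homomorphism to a free group that is injective on `{a, b}` reduces the claim to commuting `x`
and `h x h⁻¹` in a free group. There, Nielsen–Schreier makes every commutative subgroup free,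
hence cyclic, so commutation is transitive on nontrivial elements and the centralizer of `x ≠ 1`
is infinite cyclic, say `⟨r⟩`. Conjugation by `h` maps it onto the centralizer of `h x h⁻¹`,
which is the same group because `x` and `h x h⁻¹` commute; hence `h r h⁻¹ = r ^ (± 1)`. The sign
`-1` is impossible: `h ^ 2` would commute with `r`, hence by uniqueness of roots so would `h`,
forcing `r = r⁻¹`.
-/

section Group

variable {G : Type*} [Group G]

theorem commute_iff_mul_inv_cancel {a b : G} : Commute a b ↔ a * b * a⁻¹ = b := by
  rw [mul_inv_eq_iff_eq_mul]
  exact Iff.rfl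

theorem eq_one_or_neg_one_of_conj_eq_zpow [IsMulTorsionFree G] {h r : G} {k l : ℤ}
    (hr : r ≠ 1) (hk : h * r * h⁻¹ = r ^ k) (hl : h⁻¹ * r * h = r ^ l) : k = 1 ∨ k = -1 := by
  have hlk : r ^ (l * k) = r := by
    rw [zpow_mul, ← hl, show (h⁻¹ * r * h) ^ k = h⁻¹ * r ^ k * h by
      simpa using conj_zpow (a := h⁻¹), ← hk]
    group
  have hlk1 : r ^ (l * k - 1) = 1 := by rw [zpow_sub_one, hlk, mul_inv_cancel]
  rw [IsMulTorsionFree.zpow_eq_one_iff_right hr, sub_eq_zero, mul_comm] at hlk1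
  exact Int.eq_one_or_neg_one_of_mul_eq_one hlk1

end Group

namespace FreeGroup

variable {α : Type*}

theorem eq_of_commute_of {a b : α} (h : Commute (of a) (of b)) : a = b := by
  classical
  exact (by simpa [toWord_mul, toWord_of] using congrArg toWord h.eq : a = b ∧ b = a).1

theorem isCyclic_of_isMulCommutative [IsMulCommutative (FreeGroup α)] :
    IsCyclic (FreeGroup α) := by
  obtain ⟨g, hg⟩ : ∃ g, Set.range (of (α := α)) ⊆ {g} := by
    rcases isEmpty_or_nonempty α with _ | ⟨⟨a⟩⟩
    · exact ⟨1, by simp [Set.range_eq_empty]⟩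
    · refine ⟨of a, Set.range_subset_singleton.2 (funext fun b => ?_)⟩
      exact congrArg of (eq_of_commute_of (mul_comm' (of b) (of a)))
  refine isCyclic_iff_exists_zpowers_eq_top.2 ⟨g, top_unique ?_⟩
  rw [← closure_range_of, Subgroup.zpowers_eq_closure]
  exact Subgroup.closure_mono hg

theorem _root_.IsFreeGroup.isCyclic_of_isMulCommutative (G : Type*) [Group G] [IsFreeGroup G]
    [IsMulCommutative G] : IsCyclic G := by
  let e := IsFreeGroup.toFreeGroup G
  have : IsMulCommutative (FreeGroup (IsFreeGroup.Generators G)) :=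
    ⟨⟨fun x y => e.symm.injective (by simp only [_root_.map_mul, mul_comm'])⟩⟩
  exact e.symm.isCyclic.1 FreeGroup.isCyclic_of_isMulCommutative

theorem exists_mem_zpowers_of_commute {x y : FreeGroup α} (h : Commute x y) :
    ∃ z, x ∈ Subgroup.zpowers z ∧ y ∈ Subgroup.zpowers z := by
  let H := Subgroup.closure {x, y}
  have : IsMulCommutative H := Subgroup.isMulCommutative_closure (by
    simp only [Set.mem_insert_iff, Set.mem_singleton_iff]
    rintro u (rfl | rfl) v (rfl | rfl)
    exacts [rfl, h.eq, h.symm.eq, rfl])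
  obtain ⟨z, hz⟩ := (Subgroup.isCyclic_iff_exists_zpowers_eq_top H).1
    (IsFreeGroup.isCyclic_of_isMulCommutative H)
  exact ⟨z, hz ▸ Subgroup.subset_closure (by simp), hz ▸ Subgroup.subset_closure (by simp)⟩

theorem commute_of_commute_zpow {a b : FreeGroup α} {n : ℤ} (hn : n ≠ 0)
    (h : Commute (a ^ n) b) : Commute a b := by
  obtain ⟨z, hz, hb⟩ := exists_mem_zpowers_of_commute h
  obtain ⟨p, hp⟩ := Subgroup.mem_zpowers_iff.1 hz
  obtain ⟨q, rfl⟩ := Subgroup.mem_zpowers_iff.1 hb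
  rcases eq_or_ne p 0 with rfl | hp0
  · rw [zpow_zero, eq_comm, IsMulTorsionFree.zpow_eq_one_iff_left hn] at hp
    exact hp ▸ Commute.one_left _
  refine Commute.zpow_right (commute_iff_mul_inv_cancel.2 (zpow_left_injective hp0 ?_)) q
  change (a * z * a⁻¹) ^ p = z ^ p
  rw [conj_zpow, hp, (Commute.self_zpow a n).mul_inv_cancel]

theorem commute_trans {x y z : FreeGroup α} (hy : y ≠ 1) (hxy : Commute x y)
    (hyz : Commute y z) : Commute x z := by
  obtain ⟨w, hx, hy'⟩ := exists_mem_zpowers_of_commute hxy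
  obtain ⟨i, rfl⟩ := Subgroup.mem_zpowers_iff.1 hx
  obtain ⟨p, rfl⟩ := Subgroup.mem_zpowers_iff.1 hy'
  have hp : p ≠ 0 := by rintro rfl; exact hy (zpow_zero w)
  exact (commute_of_commute_zpow hp hyz).zpow_left i

theorem exists_centralizer_eq_zpowers {x : FreeGroup α} (hx : x ≠ 1) :
    ∃ r, Subgroup.centralizer {x} = Subgroup.zpowers r := by
  have : IsMulCommutative (Subgroup.centralizer {x}) := by
    refine ⟨⟨fun a b => Subtype.ext ?_⟩⟩
    have ha := Subgroup.mem_centralizer_singleton_iff.1 a.2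
    have hb := Subgroup.mem_centralizer_singleton_iff.1 b.2
    exact (commute_trans hx ha hb.symm).eq
  obtain ⟨r, hr⟩ := (Subgroup.isCyclic_iff_exists_zpowers_eq_top _).1
    (IsFreeGroup.isCyclic_of_isMulCommutative (Subgroup.centralizer {x}))
  exact ⟨r, hr.symm⟩

theorem eq_one_of_conj_eq_inv {h r : FreeGroup α} (hr : h * r * h⁻¹ = r⁻¹) : r = 1 := by
  have hsq : Commute (h ^ (2 : ℤ)) r := by
    rw [commute_iff_mul_inv_cancel]
    calc h ^ (2 : ℤ) * r * (h ^ (2 : ℤ))⁻¹ = h * (h * r * h⁻¹) * h⁻¹ := by rw [zpow_two]; group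
      _ = r := by rw [hr, ← conj_inv, hr, inv_inv]
  rw [← self_eq_inv, ← hr, (commute_of_commute_zpow two_ne_zero hsq).mul_inv_cancel]

theorem conj_eq_self_of_commute {x h : FreeGroup α} (hc : Commute x (h * x * h⁻¹)) :
    h * x * h⁻¹ = x := by
  rcases eq_or_ne x 1 with rfl | hx
  · group
  obtain ⟨r, hC⟩ := exists_centralizer_eq_zpowers hx
  have mem_iff (u : FreeGroup α) : u ∈ Subgroup.zpowers r ↔ Commute u x := by
    rw [← hC, Subgroup.mem_centralizer_singleton_iff]
    exact Iff.rfl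
  have hr1 : r ≠ 1 := by
    rintro rfl
    simpa [hx] using (mem_iff x).2 (Commute.refl x)
  obtain ⟨j, hj⟩ := Subgroup.mem_zpowers_iff.1 <| (mem_iff _).2 hc.symm
  have hry : Commute r (h * x * h⁻¹) := hj ▸ Commute.self_zpow r j
  have hrx : Commute r x := (mem_iff r).1 (Subgroup.mem_zpowers r)
  obtain ⟨k, hk⟩ := Subgroup.mem_zpowers_iff.1 <| (mem_iff (h * r * h⁻¹)).2 <|
    commute_trans (by simpa using hx) (by simpa using hrx.map (MulAut.conj h)) hc.symm
  obtain ⟨l, hl⟩ := Subgroup.mem_zpowers_iff.1 <| (mem_iff (h⁻¹ * r * h)).2 <| by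
    simpa [mul_assoc] using hry.map (MulAut.conj h⁻¹)
  rcases eq_one_or_neg_one_of_conj_eq_zpow hr1 hk.symm hl.symm with rfl | rfl
  · obtain ⟨i, rfl⟩ := Subgroup.mem_zpowers_iff.1 <| (mem_iff x).2 (Commute.refl x)
    rw [zpow_one] at hk
    exact ((commute_iff_mul_inv_cancel.2 hk.symm).zpow_right i).mul_inv_cancel
  · exact absurd (eq_one_of_conj_eq_inv (by rw [← hk, zpow_neg_one])) hr1

end FreeGroup

theorem orf_conjugate_commuting_eq_general (L : Type) [Group L] (hL : OmegaResiduallyFree L)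
    (a b g : L) (hab : a * b = b * a)
    (hconj : b = g * a * g⁻¹) : a = b := by
  classical
  obtain ⟨ι, f, hf⟩ := hL {a, b}
  refine hf (by simp) (by simp) ?_
  have hc : Commute (f a) (f g * f a * (f g)⁻¹) := by
    simpa [hconj] using (show Commute a b from hab).map f
  rw [hconj, map_mul, map_mul, map_inv, FreeGroup.conj_eq_self_of_commute hc]

theorem orf_conjugate_commuting_eq (L : Type) [Group L] (hL : OmegaResiduallyFree L)
    (a b g : L) (ha : a ≠ 1) (hb : b ≠ 1) (hab : a * b = b * a)
    (hconj : b = g * a * g⁻¹) : a = b :=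
  orf_conjugate_commuting_eq_general L hL a b g hab hconj
end

section
/- Coarse intersection of axes forces commensurable powers: Let Z be a proper metric space and let u, v be isometries of Z such that the subgroup ⟨u, v⟩ of Isom(Z) acts properly discontinuously on Z (for each x ∈ Z and R > 0, only finitely many elements g ∈ ⟨u,v⟩ satisfy d(g·x, x) ≤ R). Suppose A_u and A_v are subsets of Z on which u, respectively v, acts as a nontrivial translation along a geodesic line (u·A_u = A_u with u translating points of A_u by a fixed positive amount |u| along the line, and similarly for v). If for some k > 0 the intersection N_k(A_u) ∩ N_k(A_v) is unbounded, then there exist nonzero integers m, n with u^m = v^n. -/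
/-!
Every point of the coarse intersection lies within `2k + |u|` of some orbit point `u^a x₀` and
within `2k + |v|` of some `v^b y₀`, with `x₀ ∈ A_u`, `y₀ ∈ A_v`. As the coarse intersection is
unbounded, this produces infinitely many pairs `(a, b)` for which `v^{-b} u^a` moves `x₀` by a
bounded amount. Proper discontinuity leaves only finitely many such elements, so two distinct
pairs give the same element, i.e. `u^(a' - a) = v^(b' - b)`; neither exponent can vanish alone
because translations along a line have infinite order.
-/

open Metric Set

namespace IsometryEquiv

variable {Z : Type*} [PseudoMetricSpace Z] {u : Z ≃ᵢ Z} {ρ : ℝ → Z} {c : ℝ}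

theorem zpow_apply_of_apply_eq_add (h : ∀ t, u (ρ t) = ρ (t + c)) (j : ℤ) (t : ℝ) :
    (u ^ j) (ρ t) = ρ (t + j * c) := by
  induction j using Int.induction_on generalizing t with
  | zero => simp
  | succ i ih =>
    rw [zpow_add_one, mul_apply, h, ih]
    push_cast; ring_nf
  | pred i ih =>
    have hinv : u⁻¹ (ρ t) = ρ (t - c) := by
      rw [← inv_apply_self u (ρ (t - c)), h, sub_add_cancel]
    rw [zpow_sub_one, mul_apply, hinv, ih]
    push_cast; ring_nf

theorem not_isOfFinOrder_of_apply_eq_add (hρ : Function.Injective ρ) (hc : c ≠ 0)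
    (h : ∀ t, u (ρ t) = ρ (t + c)) : ¬IsOfFinOrder u := by
  rw [← injective_zpow_iff_not_isOfFinOrder]
  intro m n hmn
  have hρmn := congrArg (· (ρ 0)) hmn
  simp only [zpow_apply_of_apply_eq_add h, zero_add] at hρmn
  exact_mod_cast mul_right_cancel₀ hc (hρ hρmn)

theorem exists_dist_zpow_apply_lt (hρ : Isometry ρ) (hc : 0 < c)
    (h : ∀ t, u (ρ t) = ρ (t + c)) (s : ℝ) : ∃ j : ℤ, dist (ρ s) ((u ^ j) (ρ 0)) < c := by
  obtain ⟨j, ⟨hj₀, hj₁⟩, -⟩ := existsUnique_sub_zsmul_mem_Ico hc s 0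
  refine ⟨j, ?_⟩
  rw [zpow_apply_of_apply_eq_add h, hρ.dist_eq, Real.dist_eq, zero_add, abs_lt]
  rw [zsmul_eq_mul] at hj₀ hj₁
  constructor <;> linarith

theorem exists_dist_zpow_apply_lt_of_mem_cthickening (hρ : Isometry ρ) (hc : 0 < c)
    (h : ∀ t, u (ρ t) = ρ (t + c)) {k : ℝ} (hk : 0 < k) {z : Z}
    (hz : z ∈ cthickening k (range ρ)) : ∃ j : ℤ, dist z ((u ^ j) (ρ 0)) < 2 * k + c := by
  obtain ⟨_, ⟨s, rfl⟩, hzs⟩ := mem_thickening_iff.1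
    (cthickening_subset_thickening' (by linarith) (by linarith : k < 2 * k) _ hz)
  obtain ⟨j, hj⟩ := exists_dist_zpow_apply_lt hρ hc h s
  exact ⟨j, by linarith [dist_triangle z (ρ s) ((u ^ j) (ρ 0))]⟩

end IsometryEquiv

theorem exists_zpow_eq_zpow_of_inv_zpow_mul_zpow_eq {G : Type*} [Group G] {u v : G}
    (hu : ¬IsOfFinOrder u) (hv : ¬IsOfFinOrder v) {p q : ℤ × ℤ} (hpq : p ≠ q)
    (h : (v ^ p.2)⁻¹ * u ^ p.1 = (v ^ q.2)⁻¹ * u ^ q.1) :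
    ∃ m n : ℤ, m ≠ 0 ∧ n ≠ 0 ∧ u ^ m = v ^ n := by
  have key : u ^ (q.1 - p.1) = v ^ (q.2 - p.2) := by
    rw [zpow_sub, zpow_sub, mul_inv_eq_iff_eq_mul, mul_assoc, eq_comm, h, mul_inv_cancel_left]
  have hpq' : q.1 - p.1 ≠ 0 ∨ q.2 - p.2 ≠ 0 := by
    by_contra! h0
    exact hpq (Prod.ext (by omega) (by omega))
  refine ⟨q.1 - p.1, q.2 - p.2, fun hm => ?_, fun hn => ?_, key⟩
  · rw [hm, zpow_zero, eq_comm] at key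
    exact hv (isOfFinOrder_iff_zpow_eq_one.2 ⟨_, hpq'.resolve_left (not_not.2 hm), key⟩)
  · rw [hn, zpow_zero] at key
    exact hu (isOfFinOrder_iff_zpow_eq_one.2 ⟨_, hpq'.resolve_right (not_not.2 hn), key⟩)

theorem Set.infinite_of_not_isBounded_of_forall_exists_dist_le {X ι : Type*} [PseudoMetricSpace X]
    {I : Set X} (hI : ¬Bornology.IsBounded I) (f : ι → X) {S : Set ι} {δ : ℝ}
    (h : ∀ z ∈ I, ∃ i ∈ S, dist z (f i) ≤ δ) : S.Infinite := by
  intro hS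
  refine hI (((hS.image f).isBounded.cthickening (δ := δ)).subset fun z hz => ?_)
  obtain ⟨i, hi, hzi⟩ := h z hz
  exact mem_cthickening_of_dist_le z (f i) δ _ (mem_image_of_mem f hi) hzi

theorem coarse_intersection_of_axes_forces_commensurable_powers_general
    (Z : Type) [MetricSpace Z]
    (u v : Z ≃ᵢ Z)
    (hprop : ∀ (x : Z) (R : ℝ), 0 < R →
      {g : Z ≃ᵢ Z | g ∈ Subgroup.closure {u, v} ∧ dist (g x) x ≤ R}.Finite)
    (ρu ρv : ℝ → Z) (hρu : Isometry ρu) (hρv : Isometry ρv)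
    (Au Av : Set Z) (hAu : Au = Set.range ρu) (hAv : Av = Set.range ρv)
    (cu cv : ℝ) (hcu : 0 < cu) (hcv : 0 < cv)
    (htu : ∀ t : ℝ, u (ρu t) = ρu (t + cu))
    (htv : ∀ t : ℝ, v (ρv t) = ρv (t + cv))
    (k : ℝ) (hk : 0 < k)
    (hbig : ¬ Bornology.IsBounded
      (Metric.cthickening k Au ∩ Metric.cthickening k Av)) :
    ∃ m n : ℤ, m ≠ 0 ∧ n ≠ 0 ∧ u ^ m = v ^ n := by
  subst hAu hAv
  set x₀ := ρu 0
  set y₀ := ρv 0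
  let S := {p : ℤ × ℤ | dist ((u ^ p.1) x₀) ((v ^ p.2) y₀) ≤ 4 * k + cu + cv}
  let word : ℤ × ℤ → Z ≃ᵢ Z := fun p => (v ^ p.2)⁻¹ * u ^ p.1
  have hS : S.Infinite := by
    refine Set.infinite_of_not_isBounded_of_forall_exists_dist_le hbig (fun p => (u ^ p.1) x₀)
      (δ := 2 * k + cu) fun z ⟨hzu, hzv⟩ => ?_
    obtain ⟨a, ha⟩ := IsometryEquiv.exists_dist_zpow_apply_lt_of_mem_cthickening hρu hcu htu hk hzu
    obtain ⟨b, hb⟩ := IsometryEquiv.exists_dist_zpow_apply_lt_of_mem_cthickening hρv hcv htv hk hzv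
    have hab : dist ((u ^ a) x₀) ((v ^ b) y₀) ≤ 4 * k + cu + cv := by
      linarith [dist_triangle_left ((u ^ a) x₀) ((v ^ b) y₀) z]
    exact ⟨(a, b), hab, ha.le⟩
  have hword : MapsTo word S
      {g | g ∈ Subgroup.closure {u, v} ∧ dist (g x₀) x₀ ≤ 4 * k + cu + cv + dist y₀ x₀} := by
    refine fun p hp => ⟨?_, ?_⟩
    · exact mul_mem (inv_mem (zpow_mem (Subgroup.subset_closure (by simp)) _))
        (zpow_mem (Subgroup.subset_closure (by simp)) _)
    · have : dist ((word p) x₀) y₀ = dist ((u ^ p.1) x₀) ((v ^ p.2) y₀) := by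
        rw [← (v ^ p.2).dist_eq, IsometryEquiv.mul_apply, IsometryEquiv.apply_inv_self]
      linarith [dist_triangle ((word p) x₀) y₀ x₀, hp.out]
  obtain ⟨p, -, q, -, hpq, hpq_word⟩ :=
    hS.exists_ne_map_eq_of_mapsTo hword (hprop x₀ _ (by positivity))
  exact exists_zpow_eq_zpow_of_inv_zpow_mul_zpow_eq
    (IsometryEquiv.not_isOfFinOrder_of_apply_eq_add hρu.injective hcu.ne' htu)
    (IsometryEquiv.not_isOfFinOrder_of_apply_eq_add hρv.injective hcv.ne' htv) hpq hpq_word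

theorem coarse_intersection_of_axes_forces_commensurable_powers
    (Z : Type) [MetricSpace Z] [ProperSpace Z]
    (u v : Z ≃ᵢ Z)
    (hprop : ∀ (x : Z) (R : ℝ), 0 < R →
      {g : Z ≃ᵢ Z | g ∈ Subgroup.closure {u, v} ∧ dist (g x) x ≤ R}.Finite)
    (ρu ρv : ℝ → Z) (hρu : Isometry ρu) (hρv : Isometry ρv)
    (Au Av : Set Z) (hAu : Au = Set.range ρu) (hAv : Av = Set.range ρv)
    (cu cv : ℝ) (hcu : 0 < cu) (hcv : 0 < cv)
    (htu : ∀ t : ℝ, u (ρu t) = ρu (t + cu))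
    (htv : ∀ t : ℝ, v (ρv t) = ρv (t + cv))
    (k : ℝ) (hk : 0 < k)
    (hbig : ¬ Bornology.IsBounded
      (Metric.cthickening k Au ∩ Metric.cthickening k Av)) :
    ∃ m n : ℤ, m ≠ 0 ∧ n ≠ 0 ∧ u ^ m = v ^ n :=
  coarse_intersection_of_axes_forces_commensurable_powers_general Z u v hprop ρu ρv hρu hρv Au Av
    hAu hAv cu cv hcu hcv htu htv k hk hbig
end
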